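/- The subspace K(F_n) of bounded counting functions on the free group F_n is spanned by the extension relations {l_w, r_w : w ∈ F_n}, where l_w = p_w - Σ_{s ∈ S̄, s ≠ w_1^{-1}} p_{sw} and r_w = p_w - Σ_{s ∈ S̄, s ≠ w_fin^{-1}} p_{ws}. -/

import Mathlib

open List Finset

/-- Number of occurrences of `w` as a contiguous subword of `v`. -/
def occ {α : Type*} [DecidableEq α] (w v : List α) : ℕ :=
  ((List.range (v.length + 1 - w.length)).filter (fun i => decide (w <+: v.drop i))).length

/-- Elementary counting function, with the convention `p_ε(v) = |v|`. -/
def cnt {α : Type*} [DecidableEq α] (w v : List α) : ℚ :=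
  if w = [] then v.length else occ w v

/-- The inverse of a letter of `S̄`: letters are pairs (generator, sign). -/
def invL {n : ℕ} (a : Fin n × Bool) : Fin n × Bool := (a.1, !a.2)

/-- The inverse of a (reduced) word. -/
def invW {n : ℕ} (w : List (Fin n × Bool)) : List (Fin n × Bool) := (w.map invL).reverse

def redB {n : ℕ} : List (Fin n × Bool) → Bool
  | a :: b :: t => decide (b ≠ invL a) && redB (b :: t)
  | _ => true

/-- A word over `S̄` is reduced if no letter is followed by its inverse. -/
def Red {n : ℕ} (w : List (Fin n × Bool)) : Prop := redB w = true

instance {n : ℕ} : DecidablePred (Red (n := n)) := fun _ => instDecidableEqBool _ _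

/-- Left extension relation `l_w = p_w - Σ_{s : sw reduced} p_{sw}`. -/
def lgrp {n : ℕ} (w v : List (Fin n × Bool)) : ℚ :=
  cnt w v - ∑ s ∈ Finset.univ.filter (fun s => Red (s :: w)), cnt (s :: w) v

/-- Right extension relation `r_w = p_w - Σ_{s : ws reduced} p_{ws}`. -/
def rgrp {n : ℕ} (w v : List (Fin n × Bool)) : ℚ :=
  cnt w v - ∑ s ∈ Finset.univ.filter (fun s => Red (w ++ [s])), cnt (w ++ [s]) v

/-- The map `σ₁` sending a function on F_n to `f - f ∘ (·⁻¹)`; on counting functions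
it sends `p_w` to the Brooks quasimorphism `φ_w = p_w - p_{w⁻¹}`. -/
def sig1 {n : ℕ} (f : List (Fin n × Bool) → ℚ) : List (Fin n × Bool) → ℚ :=
  fun v => f v - f (invW v)

/-!
For `k ≥ 1`, every `g` in the span of the `p_w` with `|w| = k + 1` vanishes on words of length
`k` and satisfies `g (x ++ y) + g s = g x + g (s ++ y)` whenever `s` is a suffix of `x` of length
at least `k`. If `s` is the last `k` letters of a reduced word `v` and `B` is a bridge making
`s ++ B ++ v` reduced, appending `B ++ v` to `v` over and over adds `g (s ++ B ++ v)` each time,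
so a bounded `g` vanishes on `s ++ B ++ v`; consequently `g v` depends only on the first and last
`k` letters of `v`. Evaluating `g` on a canonical reduced word ending in `u` gives a potential `h`
on words of length `k` with `g w = h (w.drop 1) - h (w.take k)`, which is the identity
`g = ∑ u, h u • (r_u - l_u)`. A general bounded counting function reduces to this homogeneous
case because `l_w` rewrites `p_w` in terms of the `p_{sw}`.
-/

section Occurrences

variable {α : Type*} [DecidableEq α]

theorem occ_nil_left (v : List α) : occ [] v = v.length + 1 := by
  simp [occ]

theorem occ_nil_right (w : List α) : occ w [] = if w = [] then 1 else 0 := by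
  cases w <;> simp [occ]

theorem occ_eq_zero_of_length_lt {w v : List α} (h : v.length < w.length) : occ w v = 0 := by
  simp [occ, Nat.sub_eq_zero_of_le (Nat.succ_le_of_lt h)]

theorem occ_cons (w v : List α) (a : α) :
    occ w (a :: v) = (if w <+: a :: v then 1 else 0) + occ w v := by
  rcases lt_or_ge (v.length + 1) w.length with h | h
  · have hnp : ¬ w <+: a :: v := fun hp => by simpa using hp.length_le.trans_lt h
    rw [occ_eq_zero_of_length_lt (by simpa using h), occ_eq_zero_of_length_lt (by omega),
      if_neg hnp]
  · rw [occ, List.length_cons, show v.length + 1 + 1 - w.length = v.length + 1 - w.length + 1 by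
      omega, List.range_succ_eq_map, List.filter_cons, List.filter_map]
    split_ifs <;> simp_all [occ, Function.comp_def, Nat.add_comm]

theorem occ_of_length_eq {w v : List α} (h : w.length = v.length) :
    occ w v = if w = v then 1 else 0 := by
  cases v with
  | nil => simp_all [occ_nil_right]
  | cons a v =>
    have hp : w <+: a :: v ↔ w = a :: v := ⟨fun hp => hp.eq_of_length h, fun h => h ▸ prefix_rfl⟩
    rw [occ_cons, occ_eq_zero_of_length_lt (by simp [h]), if_congr hp rfl rfl, add_zero]

theorem occ_append_singleton (w z : List α) (a : α) :
    occ w (z ++ [a]) = occ w z + if w <:+ z ++ [a] then 1 else 0 := by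
  induction z with
  | nil => cases w <;> simp [occ_cons, occ_nil_right, List.suffix_cons_iff, eq_comm]
  | cons b z ih =>
    have hp : w <+: b :: (z ++ [a]) ↔ w = b :: (z ++ [a]) ∨ w <+: b :: z :=
      List.prefix_concat_iff (l₂ := b :: z)
    rw [List.cons_append, occ_cons, ih, occ_cons, if_congr hp rfl rfl,
      if_congr List.suffix_cons_iff rfl rfl]
    by_cases hw : w = b :: (z ++ [a])
    · have hpre : ¬ w <+: b :: z := fun h => by simpa [hw] using h.length_le
      have hsuf : ¬ w <:+ z ++ [a] := fun h => by simpa [hw] using h.length_le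
      rw [if_pos (Or.inl hw), if_pos (Or.inl hw), if_neg hpre, if_neg hsuf]
      omega
    · simp only [hw, false_or]
      omega

theorem occ_eq_ite_prefix_add_sum_occ_cons [Fintype α] (w v : List α) :
    occ w v = (if w <+: v then 1 else 0) + ∑ s, occ (s :: w) v := by
  induction v with
  | nil => simp [occ_nil_right]
  | cons a v ih =>
    simp only [occ_cons, List.cons_prefix_cons, Finset.sum_add_distrib, ite_and,
      Finset.sum_ite_eq', Finset.mem_univ, if_true]
    omega

theorem occ_eq_ite_suffix_add_sum_occ_append [Fintype α] (w v : List α) :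
    occ w v = (if w <:+ v then 1 else 0) + ∑ s, occ (w ++ [s]) v := by
  induction v using List.reverseRecOn with
  | nil => simp [occ_nil_right]
  | append_singleton v a ih =>
    have hsnoc : ∀ s, w ++ [s] <:+ v ++ [a] ↔ s = a ∧ w <:+ v := fun s => by
      rw [← List.reverse_prefix]; simp
    simp only [occ_append_singleton, hsnoc, Finset.sum_add_distrib, ih, ite_and,
      Finset.sum_ite_eq', Finset.mem_univ, if_true]
    omega

theorem sum_occ_singleton [Fintype α] (v : List α) : ∑ s, occ [s] v = v.length := by
  have := occ_eq_ite_prefix_add_sum_occ_cons [] v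
  simp only [occ_nil_left, List.nil_prefix, if_true] at this
  omega

theorem occ_append_add_occ {w x s : List α} (y : List α) (hs : s <:+ x)
    (hw : w.length ≤ s.length + 1) : occ w (x ++ y) + occ w s = occ w x + occ w (s ++ y) := by
  induction y using List.reverseRecOn with
  | nil => simp
  | append_singleton y a ih =>
    have hsx : s ++ y ++ [a] <:+ x ++ y ++ [a] := by
      obtain ⟨p, rfl⟩ := hs
      exact ⟨p, by simp⟩
    have hlen : w.length ≤ (s ++ y ++ [a]).length := by
      simp only [List.length_append, List.length_singleton]
      omega
    have hsuf : w <:+ x ++ y ++ [a] ↔ w <:+ s ++ y ++ [a] :=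
      ⟨fun h => List.suffix_of_suffix_length_le h hsx hlen, fun h => h.trans hsx⟩
    rw [← List.append_assoc, ← List.append_assoc, occ_append_singleton, occ_append_singleton,
      if_congr hsuf rfl rfl]
    omega

theorem isInfix_of_occ_ne_zero {w v : List α} (h : occ w v ≠ 0) : w <:+: v := by
  rw [occ, Ne, List.length_eq_zero_iff, List.filter_eq_nil_iff] at h
  push Not at h
  obtain ⟨i, -, hi⟩ := h
  exact (of_decide_eq_true hi).isInfix.trans (List.drop_suffix i v).isInfix

theorem cnt_apply_of_length_eq {w v : List α} (hw : w ≠ []) (h : w.length = v.length) :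
    cnt w v = if w = v then 1 else 0 := by
  rw [cnt, if_neg hw, occ_of_length_eq h]
  split_ifs <;> simp

end Occurrences

section LocalIncrements

variable (α : Type*)

def localIncrements (k : ℕ) : Submodule ℚ (List α → ℚ) where
  carrier := {g | ∀ x s y : List α, s <:+ x → k ≤ s.length →
    g (x ++ y) + g s = g x + g (s ++ y)}
  add_mem' hf hg x s y hs hk := by
    simp only [Pi.add_apply]
    linarith [hf x s y hs hk, hg x s y hs hk]
  zero_mem' := by simp
  smul_mem' c g hg x s y hs hk := by
    simp only [Pi.smul_apply, smul_eq_mul]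
    linear_combination c * hg x s y hs hk

variable {α}

theorem cnt_mem_localIncrements [DecidableEq α] {w : List α} {k : ℕ} (hw : w.length ≤ k + 1) :
    cnt w ∈ localIncrements α k := by
  intro x s y hs hk
  rcases eq_or_ne w [] with rfl | hne
  · simp only [cnt, if_true, List.length_append]
    push_cast
    ring
  · simp only [cnt, if_neg hne]
    exact_mod_cast occ_append_add_occ y hs (by omega)

end LocalIncrements

def bddOn {X : Type*} (S : Set X) : Submodule ℚ (X → ℚ) where
  carrier := {f | ∃ C, ∀ x ∈ S, |f x| ≤ C}
  add_mem' := by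
    rintro f g ⟨C₁, h₁⟩ ⟨C₂, h₂⟩
    exact ⟨C₁ + C₂, fun x hx => (abs_add_le _ _).trans (add_le_add (h₁ x hx) (h₂ x hx))⟩
  zero_mem' := ⟨0, by simp⟩
  smul_mem' c f := by
    rintro ⟨C, h⟩
    exact ⟨|c| * C, fun x hx => by
      simpa [abs_mul] using mul_le_mul_of_nonneg_left (h x hx) (abs_nonneg c)⟩

section Reduced

variable {n : ℕ}

theorem red_iff_isReduced : ∀ w : List (Fin n × Bool), Red w ↔ FreeGroup.IsReduced w
  | [] => by simp [Red, redB]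
  | [a] => by simp [Red, redB]
  | a :: b :: t => by
    rw [FreeGroup.isReduced_cons_cons, ← red_iff_isReduced (b :: t)]
    simp only [Red, redB, Bool.and_eq_true, invL]
    refine and_congr_left fun _ => ?_
    obtain ⟨a, _ | _⟩ := a <;> obtain ⟨b, _ | _⟩ := b <;> simp [Prod.ext_iff, eq_comm (a := a)]

theorem Red.infix {w v : List (Fin n × Bool)} (hv : Red v) (h : w <:+: v) : Red w := by
  rw [red_iff_isReduced] at hv ⊢
  exact hv.infix h

theorem sum_filter_red_cnt_eq_sum_occ {v : List (Fin n × Bool)} (hv : Red v)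
    (f : Fin n × Bool → List (Fin n × Bool)) (hf : ∀ s, f s ≠ []) :
    ∑ s ∈ Finset.univ.filter (fun s => Red (f s)), cnt (f s) v = ∑ s, (occ (f s) v : ℚ) := by
  rw [Finset.sum_filter_of_ne fun s _ hs => ?_]
  · simp [cnt, hf]
  · by_contra hs'
    rw [cnt, if_neg (hf s), Nat.cast_ne_zero] at hs
    exact hs' (hv.infix (isInfix_of_occ_ne_zero hs))

theorem lgrp_apply_of_red (w : List (Fin n × Bool)) {v : List (Fin n × Bool)} (hv : Red v) :
    lgrp w v = if w ≠ [] ∧ w <+: v then 1 else 0 := by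
  have h := occ_eq_ite_prefix_add_sum_occ_cons w v
  rw [lgrp, sum_filter_red_cnt_eq_sum_occ hv (· :: w) (fun _ => by simp)]
  rcases eq_or_ne w [] with rfl | hw
  · simp [cnt, ← Nat.cast_sum, sum_occ_singleton]
  · simp only [cnt, h, ne_eq, hw, not_false_eq_true, true_and]
    push_cast
    ring

theorem rgrp_apply_of_red (w : List (Fin n × Bool)) {v : List (Fin n × Bool)} (hv : Red v) :
    rgrp w v = if w ≠ [] ∧ w <:+ v then 1 else 0 := by
  have h := occ_eq_ite_suffix_add_sum_occ_append w v
  rw [rgrp, sum_filter_red_cnt_eq_sum_occ hv (w ++ [·]) (fun _ => by simp)]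
  rcases eq_or_ne w [] with rfl | hw
  · simp [cnt, ← Nat.cast_sum, sum_occ_singleton]
  · simp only [cnt, h, ne_eq, hw, not_false_eq_true, true_and]
    push_cast
    ring

end Reduced

theorem eq_zero_of_forall_abs_add_nat_mul_le {K : Type*} [Field K] [LinearOrder K]
    [IsStrictOrderedRing K] [Archimedean K] {x E C : K} (h : ∀ m : ℕ, |x + m * E| ≤ C) :
    E = 0 := by
  by_contra hE
  obtain ⟨m, hm⟩ := exists_nat_gt ((C + |x|) / |E|)
  have hm' : C + |x| < m * |E| := (div_lt_iff₀ (abs_pos.mpr hE)).mp hm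
  have : |(m : K) * E| ≤ |x + m * E| + |x| := by
    simpa using abs_sub (x + m * E) x
  rw [abs_mul, Nat.abs_cast] at this
  linarith [h m]

section Loops

open FreeGroup

variable {α : Type*} {k : ℕ} {g : List (α × Bool) → ℚ} {C : ℚ}

theorem exists_ne_forall_mem_option [Nontrivial α] (o : Option α) : ∃ d, ∀ a ∈ o, d ≠ a := by
  cases o with
  | none => simp
  | some a => simpa using exists_ne a

/-- The bridge `B` is chosen before the reducedness hypotheses, so that `choose` can pick one for
every pair of words. -/
theorem exists_isReduced_append_append [Nontrivial α] (x y : List (α × Bool)) :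
    ∃ B, IsReduced x → IsReduced y → IsReduced (x ++ B ++ y) := by
  obtain ⟨d₁, hd₁⟩ := exists_ne_forall_mem_option (x.getLast?.map Prod.fst)
  obtain ⟨d₂, hd₂⟩ := exists_ne_forall_mem_option (y.head?.map Prod.fst)
  refine ⟨[(d₁, true), (d₂, true)], fun hx hy => ?_⟩
  simp only [FreeGroup.IsReduced, List.isChain_append] at hx hy ⊢
  refine ⟨⟨hx, by simp, ?_⟩, hy, ?_⟩
  · intro a ha c hc
    simp only [List.head?_cons, Option.mem_some_iff] at hc
    subst hc
    exact fun h => absurd h.symm (hd₁ a.1 (Option.mem_map_of_mem _ ha))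
  · intro c hc b hb
    simp only [List.getLast?_append, List.getLast?_cons_cons, List.getLast?_singleton,
      Option.some_or, Option.mem_def, Option.some.injEq] at hc
    subst hc
    exact fun h => absurd h (hd₂ b.1 (Option.mem_map_of_mem _ hb))

theorem apply_append_eq_zero_of_bounded (hg : g ∈ localIncrements _ k)
    (hC : ∀ v, IsReduced v → |g v| ≤ C) {v s L : List (α × Bool)} (hv : IsReduced v)
    (hs : s <:+ v) (hsk : k ≤ s.length) (hs0 : g s = 0) (hsne : s ≠ []) (hL : IsReduced (s ++ L))
    (hsL : s <:+ L) : g (s ++ L) = 0 := by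
  have pump : ∀ m : ℕ, ∃ z, IsReduced z ∧ s <:+ z ∧ g z = g v + m * g (s ++ L) := by
    intro m
    induction m with
    | zero => exact ⟨v, hv, hs, by simp⟩
    | succ m ih =>
      obtain ⟨z, hz, ⟨p, rfl⟩, hgz⟩ := ih
      refine ⟨p ++ s ++ L, hz.append_overlap hL hsne, hsL.trans (List.suffix_append _ _), ?_⟩
      have := hg (p ++ s) s L (List.suffix_append p s) hsk
      push_cast
      linarith
  refine eq_zero_of_forall_abs_add_nat_mul_le (x := g v) (C := C) fun m => ?_
  obtain ⟨z, hz, -, hgz⟩ := pump m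
  exact hgz ▸ hC z hz

theorem apply_eq_of_isPrefix_of_isSuffix [Nontrivial α] (hg : g ∈ localIncrements _ k)
    (hshort : ∀ u : List (α × Bool), u.length = k → g u = 0) (hC : ∀ v, IsReduced v → |g v| ≤ C)
    (hk : k ≠ 0) {v v' p s : List (α × Bool)} (hv : IsReduced v) (hv' : IsReduced v')
    (hp : p <+: v) (hp' : p <+: v') (hs : s <:+ v) (hs' : s <:+ v') (hpk : p.length = k)
    (hsk : s.length = k) : g v = g v' := by
  have hpne : p ≠ [] := by rintro rfl; exact hk hpk.symm
  have hsne : s ≠ [] := by rintro rfl; exact hk hsk.symm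
  obtain ⟨B, hB⟩ := exists_isReduced_append_append s v
  have hsBv := hB (hv.infix hs.isInfix) hv
  obtain ⟨r, rfl⟩ := hp
  obtain ⟨r', rfl⟩ := hp'
  have hsBv' : IsReduced (s ++ B ++ p ++ r') :=
    (hsBv.infix ⟨[], r, by simp⟩).append_overlap hv' hpne
  simp only [List.append_assoc] at hsBv hsBv'
  have h₀ := apply_append_eq_zero_of_bounded hg hC hv hs hsk.ge (hshort s hsk) hsne hsBv
    (hs.trans (List.suffix_append _ _))
  have h₀' := apply_append_eq_zero_of_bounded hg hC hv' hs' hsk.ge (hshort s hsk) hsne hsBv'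
    (hs'.trans (List.suffix_append _ _))
  -- Both loops `s ++ B ++ v`, `s ++ B ++ v'` vanish. Locality at the last `k` letters `t` of
  -- `s ++ B` gives `g (t ++ v) = g (t ++ v')`, and locality at `p` strips `t` off again.
  obtain ⟨t, ht, htk⟩ : ∃ t, t <:+ s ++ B ∧ t.length = k :=
    ⟨_, List.drop_suffix B.length _, by simp [hsk]⟩
  have e₁ := hg (s ++ B) t (p ++ r) ht htk.ge
  have e₁' := hg (s ++ B) t (p ++ r') ht htk.ge
  have e₂ := hg (t ++ p) p r (List.suffix_append t p) hpk.ge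
  have e₂' := hg (t ++ p) p r' (List.suffix_append t p) hpk.ge
  simp only [List.append_assoc, hshort p hpk] at e₁ e₁' e₂ e₂'
  linarith

theorem exists_potential_of_bounded [Nontrivial α] (hg : g ∈ localIncrements _ k)
    (hshort : ∀ u : List (α × Bool), u.length = k → g u = 0) (hC : ∀ v, IsReduced v → |g v| ≤ C)
    (hk : k ≠ 0) : ∃ h : List (α × Bool) → ℚ, ∀ w, IsReduced w → w.length = k + 1 →
      g w = h (w.drop 1) - h (w.take k) := by
  obtain ⟨a⟩ := (inferInstance : Nonempty (α × Bool))
  set u₀ := List.replicate k a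
  have hu₀ : IsReduced u₀ := List.isChain_replicate_of_rel k fun _ => rfl
  choose B hB using fun u => exists_isReduced_append_append u₀ u
  -- By `apply_eq_of_isPrefix_of_isSuffix`, `g` takes the same value on every reduced word that
  -- starts with `u₀` and ends with `u`.
  refine ⟨fun u => g (u₀ ++ B u ++ u), fun w hw hwk => ?_⟩
  obtain ⟨π, c, rfl⟩ := (List.eq_nil_or_concat w).resolve_left (by rintro rfl; simp at hwk)
  rw [List.concat_eq_append] at hw hwk ⊢
  have hπk : π.length = k := by simpa using hwk
  have hπne : π ≠ [] := by rintro rfl; exact hk hπk.symm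
  have hπ : IsReduced π := hw.infix (List.prefix_append π [c]).isInfix
  set σ := (π ++ [c]).drop 1
  have hσk : σ.length = k := by simp [σ, hπk]
  have hσ : IsReduced σ := hw.infix (List.drop_suffix 1 _).isInfix
  have hv : IsReduced (u₀ ++ B π ++ π ++ [c]) := (hB π hu₀ hπ).append_overlap hw hπne
  have hσv : σ <:+ u₀ ++ B π ++ π ++ [c] := by
    simpa only [List.append_assoc] using
      (List.drop_suffix 1 (π ++ [c])).trans (List.suffix_append (u₀ ++ B π) _)
  have hgv := apply_eq_of_isPrefix_of_isSuffix (p := u₀) hg hshort hC hk hv (hB σ hu₀ hσ)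
    (by simp only [List.append_assoc]; exact List.prefix_append _ _)
    (by simp only [List.append_assoc]; exact List.prefix_append _ _)
    hσv (List.suffix_append _ _) (by simp [u₀]) hσk
  have e := hg (u₀ ++ B π ++ π) π [c] (List.suffix_append _ _) hπk.ge
  rw [hshort π hπk] at e
  simp only [List.take_left' hπk]
  linarith

end Loops

section ReducedWords

variable {n : ℕ}

def redWords (n m : ℕ) : Finset (List (Fin n × Bool)) :=
  (Finset.univ.image (List.ofFn : (Fin m → Fin n × Bool) → _)).filter Red

theorem mem_redWords {m : ℕ} {w : List (Fin n × Bool)} :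
    w ∈ redWords n m ↔ Red w ∧ w.length = m := by
  rw [redWords, Finset.mem_filter, and_comm]
  refine and_congr_right fun _ => ⟨fun h => ?_, fun h => ?_⟩
  · obtain ⟨f, -, rfl⟩ := Finset.mem_image.1 h
    exact List.length_ofFn
  · subst h
    exact Finset.mem_image.2 ⟨w.get, Finset.mem_univ _, List.ofFn_get w⟩

theorem sum_redWords_succ_cons {M : Type*} [AddCommMonoid M] (m : ℕ)
    (F : List (Fin n × Bool) → M) :
    ∑ w ∈ redWords n (m + 1), F w =
      ∑ u ∈ redWords n m, ∑ s ∈ Finset.univ.filter (fun s => Red (s :: u)), F (s :: u) := by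
  rw [Finset.sum_sigma']
  refine Finset.sum_bij' (fun w hw => ⟨w.tail, w.head ?_⟩) (fun p _ => p.2 :: p.1) ?_ ?_ ?_ ?_ ?_
  · rintro rfl
    simp [mem_redWords] at hw
  · intro w hw
    obtain ⟨hred, hlen⟩ := mem_redWords.1 hw
    simp only [Finset.mem_sigma, Finset.mem_filter, Finset.mem_univ, true_and, mem_redWords,
      List.cons_head_tail, List.length_tail, hlen]
    exact ⟨⟨hred.infix (List.tail_suffix w).isInfix, rfl⟩, hred⟩
  · rintro ⟨u, s⟩ h
    simp only [Finset.mem_sigma, Finset.mem_filter, mem_redWords] at h ⊢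
    exact ⟨h.2.2, by simp [h.1.2]⟩
  · intro w _
    exact List.cons_head_tail _
  · intros; rfl
  · intro w _
    rw [List.cons_head_tail]

theorem sum_redWords_succ_append {M : Type*} [AddCommMonoid M] (m : ℕ)
    (F : List (Fin n × Bool) → M) :
    ∑ w ∈ redWords n (m + 1), F w =
      ∑ u ∈ redWords n m, ∑ s ∈ Finset.univ.filter (fun s => Red (u ++ [s])), F (u ++ [s]) := by
  rw [Finset.sum_sigma']
  refine Finset.sum_bij' (fun w hw => ⟨w.dropLast, w.getLast ?_⟩) (fun p _ => p.1 ++ [p.2])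
    ?_ ?_ ?_ ?_ ?_
  · rintro rfl
    simp [mem_redWords] at hw
  · intro w hw
    obtain ⟨hred, hlen⟩ := mem_redWords.1 hw
    simp only [Finset.mem_sigma, Finset.mem_filter, Finset.mem_univ, true_and, mem_redWords,
      List.dropLast_append_getLast, List.length_dropLast, hlen]
    exact ⟨⟨hred.infix (List.dropLast_prefix w).isInfix, rfl⟩, hred⟩
  · rintro ⟨u, s⟩ h
    simp only [Finset.mem_sigma, Finset.mem_filter, mem_redWords] at h ⊢
    exact ⟨h.2.2, by simp [h.1.2]⟩
  · intro w _
    exact List.dropLast_append_getLast _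
  · intros; simp
  · intro w _
    rw [List.dropLast_append_getLast]

end ReducedWords

section Span

variable {n : ℕ}

abbrev extRelations (n : ℕ) : Set (List (Fin n × Bool) → ℚ) :=
  {g | ∃ w, Red w ∧ g = lgrp w} ∪ {g | ∃ w, Red w ∧ g = rgrp w}

theorem lgrp_eq_cnt_sub_sum (w : List (Fin n × Bool)) :
    lgrp w = cnt w - ∑ s ∈ Finset.univ.filter (fun s => Red (s :: w)), cnt (s :: w) := by
  funext v
  simp [lgrp, Finset.sum_apply]

theorem cnt_eq_lgrp_add_sum (w : List (Fin n × Bool)) :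
    cnt w = lgrp w + ∑ s ∈ Finset.univ.filter (fun s => Red (s :: w)), cnt (s :: w) := by
  rw [lgrp_eq_cnt_sub_sum]
  abel

theorem rgrp_eq_cnt_sub_sum (w : List (Fin n × Bool)) :
    rgrp w = cnt w - ∑ s ∈ Finset.univ.filter (fun s => Red (w ++ [s])), cnt (w ++ [s]) := by
  funext v
  simp [rgrp, Finset.sum_apply]

theorem rgrp_sub_lgrp (u : List (Fin n × Bool)) :
    rgrp u - lgrp u = ∑ s ∈ Finset.univ.filter (fun s => Red (s :: u)), cnt (s :: u) -
      ∑ s ∈ Finset.univ.filter (fun s => Red (u ++ [s])), cnt (u ++ [s]) := by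
  rw [lgrp_eq_cnt_sub_sum, rgrp_eq_cnt_sub_sum]
  abel

theorem sum_smul_rgrp_sub_lgrp (k : ℕ) (h : List (Fin n × Bool) → ℚ) :
    ∑ u ∈ redWords n k, h u • (rgrp u - lgrp u) =
      ∑ w ∈ redWords n (k + 1), (h (w.drop 1) - h (w.take k)) • cnt w := by
  simp only [rgrp_sub_lgrp, smul_sub, sub_smul, Finset.sum_sub_distrib, Finset.smul_sum]
  rw [sum_redWords_succ_cons, sum_redWords_succ_append]
  congr 1
  refine Finset.sum_congr rfl fun u hu => ?_
  simp [List.take_left' (mem_redWords.1 hu).2]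

theorem eq_sum_smul_cnt_of_mem_span {N : ℕ} (hN : N ≠ 0) {g : List (Fin n × Bool) → ℚ}
    (hg : g ∈ Submodule.span ℚ (cnt '' (redWords n N : Set _))) :
    g = ∑ w ∈ redWords n N, g w • cnt w := by
  let P : (List (Fin n × Bool) → ℚ) →ₗ[ℚ] (List (Fin n × Bool) → ℚ) :=
    ∑ w ∈ redWords n N, (LinearMap.proj (R := ℚ) (φ := fun _ => ℚ) w).smulRight (cnt w)
  have hP : Set.EqOn P (LinearMap.id (R := ℚ)) (cnt '' (redWords n N : Set _)) := by
    rintro _ ⟨w₀, hw₀, rfl⟩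
    have hlen := (mem_redWords.1 hw₀).2
    have hw₀ne : w₀ ≠ [] := by rintro rfl; exact hN hlen.symm
    calc P (cnt w₀) = ∑ w ∈ redWords n N, cnt w₀ w • cnt w := by simp [P]
      _ = cnt w₀ := by
        rw [Finset.sum_congr rfl fun w hw => by
          rw [cnt_apply_of_length_eq hw₀ne (by rw [hlen, (mem_redWords.1 hw).2])]]
        simp [ite_smul, Finset.mem_coe.1 hw₀]
  simpa [P] using (LinearMap.eqOn_span hP hg).symm

theorem span_extRelations_le_span_cnt :
    Submodule.span ℚ (extRelations n) ≤ Submodule.span ℚ {g | ∃ w, Red w ∧ g = cnt w} := by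
  have hcnt : ∀ w : List (Fin n × Bool), Red w →
      cnt w ∈ Submodule.span ℚ {g | ∃ w, Red w ∧ g = cnt w} :=
    fun w hw => Submodule.subset_span ⟨w, hw, rfl⟩
  rw [Submodule.span_le]
  rintro _ (⟨w, hw, rfl⟩ | ⟨w, hw, rfl⟩)
  · rw [SetLike.mem_coe, lgrp_eq_cnt_sub_sum]
    exact sub_mem (hcnt w hw) (sum_mem fun s hs => hcnt _ (Finset.mem_filter.1 hs).2)
  · rw [SetLike.mem_coe, rgrp_eq_cnt_sub_sum]
    exact sub_mem (hcnt w hw) (sum_mem fun s hs => hcnt _ (Finset.mem_filter.1 hs).2)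

theorem span_extRelations_le_bddOn : Submodule.span ℚ (extRelations n) ≤ bddOn {v | Red v} := by
  rw [Submodule.span_le]
  rintro _ (⟨w, -, rfl⟩ | ⟨w, -, rfl⟩) <;> refine ⟨1, fun v hv => ?_⟩
  · rw [lgrp_apply_of_red w hv]
    split_ifs <;> simp
  · rw [rgrp_apply_of_red w hv]
    split_ifs <;> simp

theorem span_cnt_le_sup_succ (N : ℕ) :
    Submodule.span ℚ (cnt '' (redWords n N : Set _)) ≤ Submodule.span ℚ (extRelations n) ⊔
      Submodule.span ℚ (cnt '' (redWords n (N + 1) : Set _)) := by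
  rw [Submodule.span_le]
  rintro _ ⟨w, hw, rfl⟩
  obtain ⟨hred, hlen⟩ := mem_redWords.1 hw
  rw [SetLike.mem_coe, cnt_eq_lgrp_add_sum]
  refine add_mem (Submodule.mem_sup_left (Submodule.subset_span (Or.inl ⟨w, hred, rfl⟩)))
    (Submodule.mem_sup_right (sum_mem fun s hs => Submodule.subset_span ⟨s :: w, ?_, rfl⟩))
  exact mem_redWords.2 ⟨(Finset.mem_filter.1 hs).2, by simp [hlen]⟩

theorem exists_mem_sup_span_cnt {f : List (Fin n × Bool) → ℚ}
    (hf : f ∈ Submodule.span ℚ {g | ∃ w, Red w ∧ g = cnt w}) :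
    ∃ k ≠ 0, f ∈ Submodule.span ℚ (extRelations n) ⊔
      Submodule.span ℚ (cnt '' (redWords n (k + 1) : Set _)) := by
  set T : ℕ → Submodule ℚ (List (Fin n × Bool) → ℚ) := fun N =>
    Submodule.span ℚ (extRelations n) ⊔ Submodule.span ℚ (cnt '' (redWords n N : Set _))
  have hT : Monotone T :=
    monotone_nat_of_le_succ fun N => sup_le le_sup_left (span_cnt_le_sup_succ N)
  have hle : Submodule.span ℚ {g | ∃ w, Red w ∧ g = cnt w} ≤ ⨆ N, T N := by
    rw [Submodule.span_le]
    rintro _ ⟨w, hw, rfl⟩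
    exact Submodule.mem_iSup_of_mem w.length
      (Submodule.mem_sup_right (Submodule.subset_span ⟨w, mem_redWords.2 ⟨hw, rfl⟩, rfl⟩))
  obtain ⟨N, hN⟩ := (Submodule.mem_iSup_of_directed T hT.directed_le).1 (hle hf)
  exact ⟨N + 1, N.succ_ne_zero, hT (by omega) hN⟩

theorem mem_span_extRelations_of_bounded (hn : 2 ≤ n) {k : ℕ} (hk : k ≠ 0)
    {g : List (Fin n × Bool) → ℚ}
    (hg : g ∈ Submodule.span ℚ (cnt '' (redWords n (k + 1) : Set _)))
    (hb : g ∈ bddOn {v | Red v}) : g ∈ Submodule.span ℚ (extRelations n) := by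
  have : Nontrivial (Fin n) := Fin.nontrivial_iff_two_le.2 hn
  have hrepr := eq_sum_smul_cnt_of_mem_span k.succ_ne_zero hg
  have hloc : g ∈ localIncrements _ k := by
    rw [hrepr]
    exact sum_mem fun w hw => Submodule.smul_mem _ _
      (cnt_mem_localIncrements (mem_redWords.1 hw).2.le)
  have hshort : ∀ u : List (Fin n × Bool), u.length = k → g u = 0 := by
    intro u hu
    rw [hrepr, Finset.sum_apply]
    refine Finset.sum_eq_zero fun w hw => ?_
    have hlen := (mem_redWords.1 hw).2
    have hne : w ≠ [] := by rintro rfl; simp at hlen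
    simp [cnt, hne, occ_eq_zero_of_length_lt (show u.length < w.length by omega)]
  obtain ⟨C, hC⟩ := hb
  obtain ⟨h, hh⟩ := exists_potential_of_bounded hloc hshort
    (fun v hv => hC v ((red_iff_isReduced v).2 hv)) hk
  have hsum : g = ∑ u ∈ redWords n k, h u • (rgrp u - lgrp u) := calc
    g = ∑ w ∈ redWords n (k + 1), g w • cnt w := hrepr
    _ = ∑ w ∈ redWords n (k + 1), (h (w.drop 1) - h (w.take k)) • cnt w :=
      Finset.sum_congr rfl fun w hw => by
        rw [hh w ((red_iff_isReduced w).1 (mem_redWords.1 hw).1) (mem_redWords.1 hw).2]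
    _ = ∑ u ∈ redWords n k, h u • (rgrp u - lgrp u) := (sum_smul_rgrp_sub_lgrp k h).symm
  rw [hsum]
  refine sum_mem fun u hu => Submodule.smul_mem _ _ (sub_mem ?_ ?_) <;>
    apply Submodule.subset_span
  exacts [Or.inr ⟨u, (mem_redWords.1 hu).1, rfl⟩, Or.inl ⟨u, (mem_redWords.1 hu).1, rfl⟩]

end Span

/-- K(F_n), the subspace of bounded counting functions on the free group, is spanned by
the extension relations l_w and r_w over all reduced words w. -/
theorem stmt_14 (n : ℕ) (hn : 2 ≤ n) (f : List (Fin n × Bool) → ℚ) :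
    (f ∈ Submodule.span ℚ {g : List (Fin n × Bool) → ℚ | ∃ w, Red w ∧ g = cnt w} ∧
      ∃ C : ℚ, ∀ v : List (Fin n × Bool), Red v → |f v| ≤ C) ↔
    f ∈ Submodule.span ℚ
      ({g : List (Fin n × Bool) → ℚ | ∃ w, Red w ∧ g = lgrp w} ∪
       {g : List (Fin n × Bool) → ℚ | ∃ w, Red w ∧ g = rgrp w}) := by
  constructor
  · rintro ⟨hf, hfb⟩
    obtain ⟨k, hk, hsup⟩ := exists_mem_sup_span_cnt hf
    obtain ⟨q, hq, g, hg, rfl⟩ := Submodule.mem_sup.1 hsup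
    have hqb := span_extRelations_le_bddOn hq
    have hgb : g ∈ bddOn {v | Red v} := by
      simpa using sub_mem (show q + g ∈ bddOn {v | Red v} from hfb) hqb
    exact add_mem hq (mem_span_extRelations_of_bounded hn hk hg hgb)
  · exact fun hf => ⟨span_extRelations_le_span_cnt hf, span_extRelations_le_bddOn hf⟩
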